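/- For any c > 0 and bounds k̄_d > c and k̄_p > (c/4)·k̄_d²/(k̄_d − c), there exist symmetric positive definite matrices K_d, K_p with λ_max(K_d) ≤ k̄_d and λ_max(K_p) ≤ k̄_p such that the block matrix Λ(K_d,K_p,c) = [[K_d − cI, (c/2)K_d], [(c/2)K_d, cK_p]] is positive definite. (For instance K_d = k̄_d·I and K_p = k̄_p·I work.) -/

import Mathlib

open Matrix

noncomputable def lamMax {N : Type*} [Fintype N] [DecidableEq N] (A : Matrix N N ℝ) : ℝ :=
  if h : A.IsHermitian then ⨆ i, h.eigenvalues i else 0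

/-!
Take the scalar gains `K_d = k̄_d • 1` and `K_p = k̄_p • 1`. The upper-left block of `Λ` is then
`(k̄_d - c) • 1`, positive definite since `k̄_d > c`, and its Schur complement is
`(c k̄_p - (c k̄_d / 2)² / (k̄_d - c)) • 1`, positive definite exactly when
`k̄_p > (c/4) k̄_d² / (k̄_d - c)`.
-/

open scoped ComplexOrder

namespace Matrix

variable {m n 𝕜 : Type*} [Fintype m] [Fintype n] [DecidableEq m] [DecidableEq n] [RCLike 𝕜]

theorem PosDef.fromBlocks₁₁_of_schur {A : Matrix m m 𝕜} {B : Matrix m n 𝕜} {D : Matrix n n 𝕜}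
    (hA : A.PosDef) (hS : (D - Bᴴ * A⁻¹ * B).PosDef) : (fromBlocks A B Bᴴ D).PosDef := by
  let _ := hA.isUnit.invertible
  rw [((hA.fromBlocks₁₁ B D).2 hS.posSemidef).posDef_iff_det_ne_zero, det_fromBlocks₁₁,
    invOf_eq_nonsing_inv]
  exact mul_ne_zero hA.det_pos.ne' hS.det_pos.ne'

theorem IsHermitian.eigenvalues_smul_one {r : ℝ} (h : (r • 1 : Matrix n n 𝕜).IsHermitian)
    (i : n) : h.eigenvalues i = r := by
  have : Nonempty n := ⟨i⟩
  simpa [← Algebra.algebraMap_eq_smul_one, spectrum.scalar_eq] using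
    h.eigenvalues_mem_spectrum_real i

theorem PosDef.fromBlocks_smul_one {a b d : ℝ} (ha : 0 < a) (hb : b ^ 2 < a * d) :
    (fromBlocks (a • 1) (b • 1) (b • 1) (d • 1) : Matrix (n ⊕ n) (n ⊕ n) ℝ).PosDef := by
  have hB : (b • 1 : Matrix n n ℝ)ᴴ = b • 1 := (isHermitian_one.smul (.all b)).eq
  have hS : (d • 1 - (b • 1)ᴴ * (a • 1)⁻¹ * (b • 1) : Matrix n n ℝ) = (d - b ^ 2 / a) • 1 := by
    have hA : (a • 1 : Matrix n n ℝ)⁻¹ = a⁻¹ • 1 :=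
      inv_eq_left_inv (by rw [smul_mul_smul, one_mul, inv_mul_cancel₀ ha.ne', one_smul])
    rw [hB, hA, smul_mul_smul, smul_mul_smul, one_mul, one_mul, ← sub_smul]
    congr 1
    field_simp
  have := (PosDef.one.smul ha).fromBlocks₁₁_of_schur (B := b • 1)
    (hS ▸ PosDef.one.smul (by rw [sub_pos, div_lt_iff₀ ha]; linarith))
  rwa [hB] at this

end Matrix

theorem lamMax_smul_one_le {n : Type*} [Fintype n] [DecidableEq n] {r : ℝ} (hr : 0 ≤ r) :
    lamMax (r • 1 : Matrix n n ℝ) ≤ r := by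
  have h : (r • 1 : Matrix n n ℝ).IsHermitian := isHermitian_one.smul (.all r)
  rw [lamMax, dif_pos h]
  exact Real.iSup_le (fun i => (h.eigenvalues_smul_one i).le) hr

theorem exists_bounded_gains_posdef_general (n : ℕ) (c kd kp : ℝ)
    (hc : 0 < c) (hkd : c < kd) (hkp : (c / 4) * kd ^ 2 / (kd - c) < kp) :
    ∃ Kd Kp : Matrix (Fin n) (Fin n) ℝ, Kd.PosDef ∧ Kp.PosDef ∧
      lamMax Kd ≤ kd ∧ lamMax Kp ≤ kp ∧
      (Matrix.fromBlocks (Kd - c • 1) ((c / 2) • Kd) ((c / 2) • Kd) (c • Kp)).PosDef := by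
  have hkdc : 0 < kd - c := sub_pos.mpr hkd
  have hkd0 : 0 < kd := hc.trans hkd
  have hkp' : c / 4 * kd ^ 2 < kp * (kd - c) := (div_lt_iff₀ hkdc).mp hkp
  have hkp0 : 0 < kp := pos_of_mul_pos_left ((by positivity : 0 < c / 4 * kd ^ 2).trans hkp') hkdc.le
  refine ⟨kd • 1, kp • 1, PosDef.one.smul hkd0, PosDef.one.smul hkp0, lamMax_smul_one_le hkd0.le,
    lamMax_smul_one_le hkp0.le, ?_⟩
  rw [← sub_smul, smul_smul, smul_smul]
  refine PosDef.fromBlocks_smul_one hkdc ?_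
  linarith [mul_lt_mul_of_pos_left hkp' hc]

theorem exists_bounded_gains_posdef (n : ℕ) (hn : 0 < n) (c kd kp : ℝ)
    (hc : 0 < c) (hkd : c < kd) (hkp : (c / 4) * kd ^ 2 / (kd - c) < kp) :
    ∃ Kd Kp : Matrix (Fin n) (Fin n) ℝ, Kd.PosDef ∧ Kp.PosDef ∧
      lamMax Kd ≤ kd ∧ lamMax Kp ≤ kp ∧
      (Matrix.fromBlocks (Kd - c • 1) ((c / 2) • Kd) ((c / 2) • Kd) (c • Kp)).PosDef :=
  exists_bounded_gains_posdef_general n c kd kp hc hkd hkp
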